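/- arXiv:math/0608567 — 3 statements merged into one kernel-verified Lean document; each statement's English description precedes it below -/
import Mathlib

section
/- Let Ω be a bounded measurable subset of ℝⁿ, (v_k)_{k∈ℕ} a bounded sequence in L^∞(Ω) and v ∈ L^∞(Ω) such that for every continuous function g ∈ C(ℝ) one has g(v_k) → g(v) weak* in L^∞(Ω). Then v_k → v strongly in L^p(Ω) for every 1 ≤ p < ∞. -/
open MeasureTheory Set Filter

noncomputable section

/-- Lipschitz constant of `f` on `[-C, C]`. -/
def lipOn (f : ℝ → ℝ) (C : ℝ) : ℝ :=
  sSup {L : ℝ | ∃ u ∈ Icc (-C) C, ∃ v ∈ Icc (-C) C, u ≠ v ∧ L = |f u - f v| / |u - v|}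

/-- `(η, q)` is an entropy pair for `∂ₜu + ∂ₓ f(u) + z'(x) b(u) = 0`. -/
def IsEntropyPair (f η q : ℝ → ℝ) : Prop :=
  ContDiff ℝ 2 η ∧ ConvexOn ℝ univ η ∧ ContDiff ℝ 1 q ∧
    ∀ s, deriv q s = deriv η s * deriv f s

/-- boundary entropy pair. -/
def IsBoundaryEntropyPair (f η q : ℝ → ℝ) : Prop :=
  IsEntropyPair f η q ∧ ∃ w, η w = 0 ∧ deriv η w = 0 ∧ q w = 0

/-- time partial derivative of a function on ℝ². -/
def dtFun (φ : ℝ × ℝ → ℝ) (x t : ℝ) : ℝ := fderiv ℝ φ (x, t) (0, 1)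

/-- space partial derivative of a function on ℝ². -/
def dxFun (φ : ℝ × ℝ → ℝ) (x t : ℝ) : ℝ := fderiv ℝ φ (x, t) (1, 0)

/-- nonnegative test function in `C₀^∞(cl Ω × [0, T))`. -/
def IsTestFun (T : ℝ) (φ : ℝ × ℝ → ℝ) : Prop :=
  ContDiff ℝ (⊤ : ℕ∞) φ ∧ HasCompactSupport φ ∧ (∀ p, 0 ≤ φ p) ∧
    ∀ x t, T ≤ t → φ (x, t) = 0

/-- nonnegative test function in `C₀^∞(cl Ω × (0, T))`. -/
def IsTestFun0 (T : ℝ) (φ : ℝ × ℝ → ℝ) : Prop :=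
  IsTestFun T φ ∧ ∀ x t, t ≤ 0 → φ (x, t) = 0

/-- sup norm of `μ` over `Ω_T × (0,1)`. -/
def procSup (xl xr T : ℝ) (μ : ℝ → ℝ → ℝ → ℝ) : ℝ :=
  sSup {y : ℝ | ∃ x ∈ Ioo xl xr, ∃ t ∈ Ioo 0 T, ∃ α ∈ Ioo (0:ℝ) 1, y = |μ x t α|}

/-- sup norm of `u` over `Ω_T`. -/
def solSup (xl xr T : ℝ) (u : ℝ → ℝ → ℝ) : ℝ :=
  sSup {y : ℝ | ∃ x ∈ Ioo xl xr, ∃ t ∈ Ioo 0 T, y = |u x t|}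

/-- entropy process solution of the IBVP. -/
def IsEntropyProcessSol (xl xr T : ℝ) (f b z' u0 ul ur : ℝ → ℝ)
    (μ : ℝ → ℝ → ℝ → ℝ) : Prop :=
  Measurable (fun p : ℝ × ℝ × ℝ => μ p.1 p.2.1 p.2.2) ∧
  (∃ M, ∀ x ∈ Ioo xl xr, ∀ t ∈ Ioo 0 T, ∀ α ∈ Ioo (0:ℝ) 1, |μ x t α| ≤ M) ∧
  ∀ η q, IsBoundaryEntropyPair f η q →
    ∀ φ : ℝ × ℝ → ℝ, IsTestFun T φ →
      0 ≤ (∫ t in Ioo 0 T, ∫ x in Ioo xl xr, ∫ α in Ioo (0:ℝ) 1,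
              (η (μ x t α) * dtFun φ x t + q (μ x t α) * dxFun φ x t
                - deriv η (μ x t α) * z' x * b (μ x t α) * φ (x, t)))
        + (∫ x in Ioo xl xr, η (u0 x) * φ (x, 0))
        + lipOn f (procSup xl xr T μ) *
            (∫ t in Ioo 0 T, (η (ur t) * φ (xr, t) + η (ul t) * φ (xl, t)))

/-- entropy solution of the IBVP. -/
def IsEntropySol (xl xr T : ℝ) (f b z' u0 ul ur : ℝ → ℝ)
    (u : ℝ → ℝ → ℝ) : Prop :=
  Measurable (fun p : ℝ × ℝ => u p.1 p.2) ∧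
  (∃ M, ∀ x ∈ Ioo xl xr, ∀ t ∈ Ioo 0 T, |u x t| ≤ M) ∧
  ∀ η q, IsBoundaryEntropyPair f η q →
    ∀ φ : ℝ × ℝ → ℝ, IsTestFun T φ →
      0 ≤ (∫ t in Ioo 0 T, ∫ x in Ioo xl xr,
              (η (u x t) * dtFun φ x t + q (u x t) * dxFun φ x t
                - deriv η (u x t) * z' x * b (u x t) * φ (x, t)))
        + (∫ x in Ioo xl xr, η (u0 x) * φ (x, 0))
        + lipOn f (solSup xl xr T u) *
            (∫ t in Ioo 0 T, (η (ur t) * φ (xr, t) + η (ul t) * φ (xl, t)))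

/-- essential limit from the left at `a`. -/
def EssLimUp (F : ℝ → ℝ) (a L : ℝ) : Prop :=
  ∃ E : Set ℝ, volume E = 0 ∧ Tendsto F (nhdsWithin a (Iio a \ E)) (nhds L)

/-- essential limit from the right at `a`. -/
def EssLimDown (F : ℝ → ℝ) (a L : ℝ) : Prop :=
  ∃ E : Set ℝ, volume E = 0 ∧ Tendsto F (nhdsWithin a (Ioi a \ E)) (nhds L)

def signPos (s : ℝ) : ℝ := if 0 < s then 1 else 0
def signNeg (s : ℝ) : ℝ := if s < 0 then -1 else 0

/-- Engquist-Osher numerical flux. -/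
def eoFlux (f : ℝ → ℝ) (u v : ℝ) : ℝ :=
  (∫ ξ in (0:ℝ)..u, max (deriv f ξ) 0) - (∫ ξ in (0:ℝ)..v, max (-(deriv f ξ)) 0) + f 0

/-- one explicit Euler step of the Engquist-Osher scheme. -/
def HEO (f : ℝ → ℝ) (Δx Δt u v w : ℝ) : ℝ :=
  v - Δt / Δx * (eoFlux f v w - eoFlux f u v)

/-- numerical entropy flux for the Engquist-Osher scheme. -/
def GFlux (f η q : ℝ → ℝ) (u v : ℝ) : ℝ :=
  (∫ ξ in (0:ℝ)..u, deriv η ξ * max (deriv f ξ) 0)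
    - (∫ ξ in (0:ℝ)..v, deriv η ξ * max (-(deriv f ξ)) 0) + q 0

/-- density function `χ_s`. -/
def chiFun (s ξ : ℝ) : ℝ :=
  if 0 < ξ ∧ ξ < s then 1 else if s < ξ ∧ ξ < 0 then -1 else 0

/-- integrand representation of the Engquist-Osher step. -/
def hFun (f : ℝ → ℝ) (Δx Δt u v w ξ : ℝ) : ℝ :=
  chiFun v ξ
    - Δt / Δx * (max (deriv f ξ) 0 * chiFun v ξ - max (-(deriv f ξ)) 0 * chiFun w ξ)
    + Δt / Δx * (max (deriv f ξ) 0 * chiFun u ξ + max (-(deriv f ξ)) 0 * chiFun v ξ)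

/-- cell average of `z` over cell `j` (extended constantly outside `{0, …, m-1}`). -/
def zCell (z : ℝ → ℝ) (xl Δx : ℝ) (m : ℕ) (j : ℤ) : ℝ :=
  if j < 0 then Δx⁻¹ * ∫ x in xl..(xl + Δx), z x
  else if (m : ℤ) ≤ j then Δx⁻¹ * ∫ x in (xl + ((m : ℝ) - 1) * Δx)..(xl + (m : ℝ) * Δx), z x
  else Δx⁻¹ * ∫ x in (xl + (j : ℝ) * Δx)..(xl + ((j : ℝ) + 1) * Δx), z x

/-- equilibrium reconstruction: the solution `r` of `D r + zj = D v + zc`. -/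
def recon (D : ℝ → ℝ) (zc zj v : ℝ) : ℝ := Function.invFun D (D v + zc - zj)

/-- the discrete values `uⁿⱼ` of the well-balanced Engquist-Osher scheme. -/
def schemeU (f D z u0 ul ur : ℝ → ℝ) (xl Δx Δt : ℝ) (m : ℕ) : ℕ → ℤ → ℝ
  | 0 => fun j =>
      if j < 0 then Δt⁻¹ * ∫ t in (0:ℝ)..Δt, ul t
      else if (m : ℤ) ≤ j then Δt⁻¹ * ∫ t in (0:ℝ)..Δt, ur t
      else Δx⁻¹ * ∫ x in (xl + (j : ℝ) * Δx)..(xl + ((j : ℝ) + 1) * Δx), u0 x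
  | (n + 1) => fun j =>
      if j < 0 then Δt⁻¹ * ∫ t in (((n : ℝ) + 1) * Δt)..(((n : ℝ) + 2) * Δt), ul t
      else if (m : ℤ) ≤ j then Δt⁻¹ * ∫ t in (((n : ℝ) + 1) * Δt)..(((n : ℝ) + 2) * Δt), ur t
      else
        schemeU f D z u0 ul ur xl Δx Δt m n j - Δt / Δx *
          (eoFlux f (schemeU f D z u0 ul ur xl Δx Δt m n j)
              (recon D (zCell z xl Δx m (j + 1)) (zCell z xl Δx m j)
                (schemeU f D z u0 ul ur xl Δx Δt m n (j + 1)))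
           - eoFlux f
              (recon D (zCell z xl Δx m (j - 1)) (zCell z xl Δx m j)
                (schemeU f D z u0 ul ur xl Δx Δt m n (j - 1)))
              (schemeU f D z u0 ul ur xl Δx Δt m n j))

/-- the numerical solution `u_Δx` as a function on `ℝ × [0, T)`. -/
def numSol (f D z u0 ul ur : ℝ → ℝ) (xl Δx Δt : ℝ) (m : ℕ) (x t : ℝ) : ℝ :=
  schemeU f D z u0 ul ur xl Δx Δt m (⌊t / Δt⌋.toNat) ⌊(x - xl) / Δx⌋

/-- `max{‖u₀‖_∞, ‖u_l‖_∞, ‖u_r‖_∞}`. -/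
def Mconst (xl xr T : ℝ) (u0 ul ur : ℝ → ℝ) : ℝ :=
  max (sSup ((fun x => |u0 x|) '' Ioo xl xr))
    (max (sSup ((fun t => |ul t|) '' Ioo 0 T)) (sSup ((fun t => |ur t|) '' Ioo 0 T)))

/-- the a priori bound `C^Δx_T` for the well-balanced scheme. -/
def CDxT (xl xr T Δx : ℝ) (b z u0 ul ur D : ℝ → ℝ) : ℝ :=
  Mconst xl xr T u0 ul ur *
      Real.exp (2 * T * sSup (Set.range fun s => |deriv b s|) *
        sSup ((fun x => |deriv z x|) '' Ioo xl xr))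
    + Δx * (sSup ((fun x => |deriv z x|) '' Ioo xl xr) / sInf (Set.range (deriv D))) *
      Real.exp (4 * T * sSup (Set.range fun s => |deriv b s|) *
        sSup ((fun x => |deriv z x|) '' Ioo xl xr))
    + |b 0| *
      Real.exp (2 * T * (sSup (Set.range fun s => |deriv b s|) + 1) *
        sSup ((fun x => |deriv z x|) '' Ioo xl xr))


/-- bounded measurable functions are integrable on finite-measure sets -/
lemma aux_intOn {α : Type*} [MeasurableSpace α] {μ : Measure α} {Ω : Set α}
    (hΩ : μ Ω < ⊤) {f : α → ℝ} (hf : Measurable f) {C : ℝ}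
    (hC : ∀ x, |f x| ≤ C) : IntegrableOn f Ω μ := by
  have hconst : IntegrableOn (fun _ : α => C) Ω μ :=
    integrableOn_const hΩ.ne
  exact hconst.mono' hf.aestronglyMeasurable
    (Filter.Eventually.of_forall fun x => by simpa using hC x)

/-- If ∫ f_k² → 0 with uniform bound, then ∫ |f_k| → 0. -/
lemma aux_L1 {α : Type*} [MeasurableSpace α] {μ : Measure α} {Ω : Set α}
    (hΩ : μ Ω < ⊤) (f : ℕ → α → ℝ) (hm : ∀ k, Measurable (f k)) {B : ℝ}
    (hB : ∀ k x, |f k x| ≤ B)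
    (h2 : Tendsto (fun k => ∫ x in Ω, (f k x) ^ 2 ∂μ) atTop (nhds 0)) :
    Tendsto (fun k => ∫ x in Ω, |f k x| ∂μ) atTop (nhds 0) := by
  have hμ0 : (0:ℝ) ≤ (μ Ω).toReal := ENNReal.toReal_nonneg
  rw [Metric.tendsto_atTop]
  intro ε hε
  set δ : ℝ := ε / (2 * ((μ Ω).toReal + 1)) with hδdef
  have hδ : 0 < δ := by positivity
  have hδμ : (μ Ω).toReal * δ < ε / 2 := by
    rw [hδdef, mul_div_assoc', div_lt_div_iff₀ (by positivity) (by norm_num)]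
    nlinarith
  rw [Metric.tendsto_atTop] at h2
  obtain ⟨N, hN⟩ := h2 (δ * (ε/2)) (by positivity)
  refine ⟨N, fun k hk => ?_⟩
  have hint1 : IntegrableOn (fun x => |f k x|) Ω μ :=
    aux_intOn hΩ (hm k).abs (C := B) (fun x => by simpa using hB k x)
  have hint2 : IntegrableOn (fun x => (f k x) ^ 2) Ω μ :=
    aux_intOn hΩ ((hm k).pow_const 2) (C := B ^ 2) (fun x => by
      have h1 := hB k x
      have h0 : (0:ℝ) ≤ |f k x| := abs_nonneg _
      rw [abs_of_nonneg (by positivity)]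
      calc (f k x)^2 = |f k x|^2 := (sq_abs _).symm
        _ ≤ B^2 := by nlinarith)
  have hintc : IntegrableOn (fun _ : α => δ) Ω μ := integrableOn_const hΩ.ne
  have hmono : (∫ x in Ω, |f k x| ∂μ) ≤ ∫ x in Ω, (δ + (f k x)^2 / δ) ∂μ := by
    refine integral_mono hint1 (hintc.add (hint2.div_const δ)) (fun x => ?_)
    have h0 : (0:ℝ) ≤ |f k x| := abs_nonneg _
    have hd : f k x ^ 2 / δ * δ = f k x ^ 2 := div_mul_cancel₀ _ hδ.ne'
    have hsa : |f k x| ^ 2 = f k x ^ 2 := sq_abs _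
    show |f k x| ≤ δ + f k x ^ 2 / δ
    nlinarith [sq_nonneg (|f k x| - δ)]
  have heq : (∫ x in Ω, (δ + (f k x)^2 / δ) ∂μ)
      = (μ Ω).toReal * δ + (∫ x in Ω, (f k x)^2 ∂μ) / δ := by
    rw [integral_add hintc (hint2.div_const δ), setIntegral_const, smul_eq_mul,
      MeasureTheory.integral_div δ (fun x => f k x ^ 2)]
    rfl
  have hsq : (∫ x in Ω, (f k x)^2 ∂μ) < δ * (ε/2) := by
    have := hN k hk
    rw [Real.dist_eq, sub_zero] at this
    exact lt_of_le_of_lt (le_abs_self _) this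
  have hnn : (0:ℝ) ≤ ∫ x in Ω, |f k x| ∂μ :=
    integral_nonneg fun x => abs_nonneg _
  rw [Real.dist_eq, sub_zero, abs_of_nonneg hnn]
  calc (∫ x in Ω, |f k x| ∂μ) ≤ (μ Ω).toReal * δ + (∫ x in Ω, (f k x)^2 ∂μ) / δ := by
        rw [← heq]; exact hmono
    _ < ε/2 + (δ * (ε/2)) / δ :=
        add_lt_add_of_lt_of_le hδμ (div_le_div_of_nonneg_right hsq.le hδ.le)
    _ = ε := by rw [mul_div_cancel_left₀ _ hδ.ne']; ring

/-- nonlinear weak* convergence implies strong `L^p` convergence. -/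
theorem weak_star_to_strong_Lp
    (n : ℕ) (Ω : Set (Fin n → ℝ))
    (hΩm : MeasurableSet Ω) (hΩb : Bornology.IsBounded Ω)
    (v : ℕ → (Fin n → ℝ) → ℝ) (hvm : ∀ k, Measurable (v k))
    (hvb : ∃ M, ∀ k x, |v k x| ≤ M)
    (w : (Fin n → ℝ) → ℝ) (hwm : Measurable w) (hwb : ∃ M, ∀ x, |w x| ≤ M)
    (hconv : ∀ g : ℝ → ℝ, Continuous g →
      ∀ ψ : (Fin n → ℝ) → ℝ, IntegrableOn ψ Ω →
        Tendsto (fun k => ∫ x in Ω, g (v k x) * ψ x) atTop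
          (nhds (∫ x in Ω, g (w x) * ψ x))) :
    ∀ p : ℝ, 1 ≤ p →
      Tendsto (fun k => ∫ x in Ω, |v k x - w x| ^ p) atTop (nhds 0) := by
  obtain ⟨M1, hM1⟩ := hvb
  obtain ⟨M2, hM2⟩ := hwb
  have hvB : ∀ k x, |v k x| ≤ |M1| := fun k x => (hM1 k x).trans (le_abs_self _)
  have hwB : ∀ x, |w x| ≤ |M2| := fun x => (hM2 x).trans (le_abs_self _)
  have hμ : volume Ω < ⊤ := hΩb.measure_lt_top
  set B : ℝ := |M1| + |M2| with hBdef
  have hB0 : 0 ≤ B := by positivity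
  have hfB : ∀ k x, |v k x - w x| ≤ B := fun k x =>
    (abs_sub _ _).trans (add_le_add (hvB k x) (hwB x))
  -- step 1 : ∫ v_k² → ∫ w²
  have h1 : Tendsto (fun k => ∫ x in Ω, (v k x) ^ 2) atTop
      (nhds (∫ x in Ω, (w x) ^ 2)) := by
    have := hconv (fun s => s ^ 2) (by continuity) (fun _ => (1:ℝ))
      (integrableOn_const hμ.ne)
    simpa using this
  -- step 2 : ∫ v_k w → ∫ w w
  have h2 : Tendsto (fun k => ∫ x in Ω, v k x * w x) atTop
      (nhds (∫ x in Ω, w x * w x)) := by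
    have := hconv (fun s => s) continuous_id w (aux_intOn hμ hwm hwB)
    simpa using this
  -- step 3 : ∫ (v_k - w)² → 0
  have i3 : IntegrableOn (fun x => (w x) ^ 2) Ω :=
    aux_intOn hμ (hwm.pow_const 2) (C := |M2| ^ 2) (fun x => by
      have h1' := hwB x
      have h0 : (0:ℝ) ≤ |w x| := abs_nonneg _
      rw [abs_of_nonneg (by positivity)]
      calc (w x)^2 = |w x|^2 := (sq_abs _).symm
        _ ≤ |M2|^2 := by nlinarith)
  have key : Tendsto (fun k => ∫ x in Ω, (v k x - w x) ^ 2) atTop (nhds 0) := by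
    have hexp : ∀ k, (∫ x in Ω, (v k x - w x) ^ 2)
        = (∫ x in Ω, (v k x) ^ 2) - 2 * (∫ x in Ω, v k x * w x)
          + ∫ x in Ω, (w x) ^ 2 := by
      intro k
      have i1 : IntegrableOn (fun x => (v k x) ^ 2) Ω :=
        aux_intOn hμ ((hvm k).pow_const 2) (C := |M1| ^ 2) (fun x => by
          have h1' := hvB k x
          have h0 : (0:ℝ) ≤ |v k x| := abs_nonneg _
          rw [abs_of_nonneg (by positivity)]
          calc (v k x)^2 = |v k x|^2 := (sq_abs _).symm
            _ ≤ |M1|^2 := by nlinarith)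
      have i2 : IntegrableOn (fun x => v k x * w x) Ω :=
        aux_intOn hμ ((hvm k).mul hwm) (C := |M1| * |M2|) (fun x => by
          rw [abs_mul]
          exact mul_le_mul (hvB k x) (hwB x) (abs_nonneg _) (abs_nonneg _))
      have i12 : IntegrableOn (fun x => v k x ^ 2 - 2 * (v k x * w x)) Ω := by
        have := i1.sub (i2.const_mul 2)
        exact this
      calc (∫ x in Ω, (v k x - w x) ^ 2)
          = ∫ x in Ω, ((v k x) ^ 2 - 2 * (v k x * w x) + (w x) ^ 2) := by
            congr 1; funext x; ring
        _ = (∫ x in Ω, (v k x) ^ 2) - 2 * (∫ x in Ω, v k x * w x)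
              + ∫ x in Ω, (w x) ^ 2 := by
            rw [integral_add i12 i3, integral_sub i1 (i2.const_mul 2),
              MeasureTheory.integral_const_mul]
    have hww : (∫ x in Ω, w x * w x) = ∫ x in Ω, (w x) ^ 2 := by
      congr 1; funext x; ring
    have h0 : (∫ x in Ω, (w x) ^ 2) - 2 * (∫ x in Ω, w x * w x)
        + (∫ x in Ω, (w x) ^ 2) = 0 := by rw [hww]; ring
    simp only [hexp]
    exact h0 ▸ ((h1.sub (h2.const_mul 2)).add_const _)
  -- step 4 : ∫ |v_k - w| → 0
  have hL1 : Tendsto (fun k => ∫ x in Ω, |v k x - w x|) atTop (nhds 0) :=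
    aux_L1 hμ (fun k x => v k x - w x) (fun k => (hvm k).sub hwm) hfB key
  -- step 5 : ∫ |v_k - w|^p → 0
  intro p hp
  have hp1 : (0:ℝ) ≤ p - 1 := by linarith
  set C : ℝ := B + 1 with hCdef
  have hC1 : (1:ℝ) ≤ C := by simp [hCdef]; linarith
  have hC0 : (0:ℝ) < C := by linarith
  have hpw : ∀ k x, |v k x - w x| ^ p ≤ C ^ (p - 1) * |v k x - w x| := by
    intro k x
    set a : ℝ := |v k x - w x| with hadef
    have ha0 : 0 ≤ a := abs_nonneg _
    have haC : a ≤ C := (hfB k x).trans (by linarith)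
    rcases eq_or_lt_of_le ha0 with h | h
    · rw [← h, Real.zero_rpow (by linarith : p ≠ 0), mul_zero]
    · have hsplit : a ^ (p - 1) * a = a ^ p := by
        rw [Real.rpow_sub h, Real.rpow_one, div_mul_cancel₀ _ h.ne']
      rw [← hsplit]
      exact mul_le_mul_of_nonneg_right
        (Real.rpow_le_rpow ha0 haC hp1) ha0
  have hintp : ∀ k, IntegrableOn (fun x => |v k x - w x| ^ p) Ω := by
    intro k
    refine aux_intOn hμ (((hvm k).sub hwm).abs.pow_const p) (C := C ^ (p - 1) * B)
      (fun x => ?_)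
    rw [abs_of_nonneg (Real.rpow_nonneg (abs_nonneg _) p)]
    exact (hpw k x).trans (mul_le_mul_of_nonneg_left (hfB k x)
      (Real.rpow_nonneg hC0.le _))
  have hintabs : ∀ k, IntegrableOn (fun x => |v k x - w x|) Ω := fun k =>
    aux_intOn hμ ((hvm k).sub hwm).abs (C := B) (fun x => by simpa using hfB k x)
  refine squeeze_zero
    (fun k => integral_nonneg fun x => Real.rpow_nonneg (abs_nonneg _) p)
    (fun k => ?_) (by simpa using hL1.const_mul (C ^ (p - 1)))
  calc (∫ x in Ω, |v k x - w x| ^ p)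
      ≤ ∫ x in Ω, C ^ (p - 1) * |v k x - w x| :=
        integral_mono (hintp k) ((hintabs k).const_mul _) (hpw k)
    _ = C ^ (p - 1) * ∫ x in Ω, |v k x - w x| := MeasureTheory.integral_const_mul _ _


end
end

section
/- Suppose the discrete values at time level n are stationary for the well-balanced scheme, i.e. D(u^n_j) + z_j = D(u^n_{j−1}) + z_{j−1} for all j ∈ J. Then the equilibrium reconstructions satisfy u^n_{j−1,+} = u^n_j and u^n_{j+1,−} = u^n_j for all j ∈ J, and consequently the well-balanced update gives u^{n+1}_j = u^n_j for all j ∈ J. -/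
open MeasureTheory Set Filter

noncomputable section

/-- the well-balanced scheme preserves discrete stationary states. -/
theorem well_balanced_preserves_equilibria
    (f b D : ℝ → ℝ) (hf : ContDiff ℝ 2 f) (hb : ContDiff ℝ 1 b)
    (hD : ∀ s, D s = ∫ ξ in (0:ℝ)..s, deriv f ξ / b ξ)
    (hDC : ContDiff ℝ 1 D) (hDsurj : Function.Surjective D)
    (hDinf : ∃ c > 0, ∀ s, c ≤ deriv D s)
    (g : ℝ → ℝ → ℝ) (Δx Δt : ℝ) (hΔx : 0 < Δx) (hΔt : 0 < Δt)
    (jl jr : ℤ) (hj : jl ≤ jr) (u zj : ℤ → ℝ)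
    (hstat : ∀ j : ℤ, jl ≤ j → j ≤ jr + 1 →
      D (u j) + zj j = D (u (j - 1)) + zj (j - 1)) :
    ∀ j : ℤ, jl ≤ j → j ≤ jr →
      recon D (zj (j - 1)) (zj j) (u (j - 1)) = u j ∧
      recon D (zj (j + 1)) (zj j) (u (j + 1)) = u j ∧
      u j - Δt / Δx *
          (g (u j) (recon D (zj (j + 1)) (zj j) (u (j + 1)))
            - g (recon D (zj (j - 1)) (zj j) (u (j - 1))) (u j)) = u j := by
  obtain ⟨c, hc, hcle⟩ := hDinf
  have hmono : StrictMono D := by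
    apply strictMono_of_deriv_pos
    intro s; exact lt_of_lt_of_le hc (hcle s)
  have hinj : Function.Injective D := hmono.injective
  intro j hjl hjr
  have h1 : recon D (zj (j - 1)) (zj j) (u (j - 1)) = u j := by
    have := hstat j hjl (by omega)
    have heq : D (u (j - 1)) + zj (j - 1) - zj j = D (u j) := by linarith
    rw [recon, heq]
    exact Function.leftInverse_invFun hinj (u j)
  have h2 : recon D (zj (j + 1)) (zj j) (u (j + 1)) = u j := by
    have := hstat (j + 1) (by omega) (by omega)
    simp only [add_sub_cancel_right] at this
    have heq : D (u (j + 1)) + zj (j + 1) - zj j = D (u j) := by linarith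
    rw [recon, heq]
    exact Function.leftInverse_invFun hinj (u j)
  refine ⟨h1, h2, ?_⟩
  rw [h1, h2]
  ring

end
end

section
/- Let f ∈ C²(ℝ), b ∈ C¹(ℝ) with b' ∈ L^∞(ℝ), and D(s) := ∫₀^s f'(ξ)/b(ξ) dξ with D ∈ C¹(ℝ) and inf_ℝ D' > 0 (so that f' = D'·b). Let g be the Engquist–Osher flux. Then for all u, v, w ∈ ℝ: |g(u,v) − g(u,w)| ≤ (‖b'‖_{L^∞(ℝ)} · max{|v|, |w|} + |b(0)|) · |D(v) − D(w)|. -/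
open MeasureTheory Set Filter

noncomputable section

/-- continuity estimate for the Engquist-Osher flux in terms
of `D`. -/
theorem eo_flux_estimate
    (f b D : ℝ → ℝ) (hf : ContDiff ℝ 2 f) (hb : ContDiff ℝ 1 b)
    (hbb : BddAbove (Set.range fun s => |deriv b s|))
    (hD : ∀ s, D s = ∫ ξ in (0:ℝ)..s, deriv f ξ / b ξ)
    (hDC : ContDiff ℝ 1 D) (hDinf : ∃ c > 0, ∀ s, c ≤ deriv D s)
    (hfD : ∀ s, deriv f s = deriv D s * b s)
    (u v w : ℝ) :
    |eoFlux f u v - eoFlux f u w| ≤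
      (sSup (Set.range fun s => |deriv b s|) * max |v| |w| + |b 0|)
        * |D v - D w| := by
  obtain ⟨c, hc, hcD⟩ := hDinf
  set M := sSup (Set.range fun s => |deriv b s|) with hM
  have hcontf' : Continuous (deriv f) := hf.continuous_deriv one_le_two
  have hcontD' : Continuous (deriv D) := hDC.continuous_deriv le_rfl
  have hcontg : Continuous fun ξ => max (-(deriv f ξ)) 0 :=
    (hcontf'.neg).max continuous_const
  have hMle : ∀ s, |deriv b s| ≤ M := fun s => le_csSup hbb ⟨s, rfl⟩
  have hM0 : 0 ≤ M := le_trans (abs_nonneg _) (hMle 0)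
  -- Lipschitz-type bound on b
  have hblip : ∀ ξ : ℝ, |b ξ| ≤ M * |ξ| + |b 0| := by
    intro ξ
    have hdiff : ∀ x ∈ (Set.univ : Set ℝ), DifferentiableAt ℝ b x :=
      fun x _ => (hb.differentiable one_ne_zero).differentiableAt
    have := (convex_univ (𝕜 := ℝ) (E := ℝ)).norm_image_sub_le_of_norm_deriv_le
      (f := b) (fun x hx => (hb.differentiable one_ne_zero).differentiableAt)
      (C := M) ?_ (Set.mem_univ 0) (Set.mem_univ ξ)
    · have h1 : |b ξ - b 0| ≤ M * |ξ| := by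
        simpa [Real.norm_eq_abs] using this
      calc |b ξ| = |(b ξ - b 0) + b 0| := by ring_nf
        _ ≤ |b ξ - b 0| + |b 0| := abs_add_le _ _
        _ ≤ M * |ξ| + |b 0| := by linarith
    · intro x hx
      simpa [Real.norm_eq_abs] using hMle x
  -- auxiliary lemma for ordered endpoints
  have key : ∀ a a' : ℝ, a ≤ a' →
      |eoFlux f u a' - eoFlux f u a| ≤ (M * max |a'| |a| + |b 0|) * |D a' - D a| := by
    intro a a' haa
    set K := M * max |a'| |a| + |b 0| with hK
    have hK0 : 0 ≤ K := by positivity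
    -- pointwise bound on [a, a']
    have hpt : ∀ ξ ∈ Set.Icc a a', max (-(deriv f ξ)) 0 ≤ K * deriv D ξ := by
      intro ξ hξ
      have hξabs : |ξ| ≤ max |a'| |a| := by
        apply abs_le.mpr
        constructor
        · have : -(max |a'| |a|) ≤ -|a| := neg_le_neg (le_max_right _ _)
          linarith [neg_abs_le a, hξ.1]
        · exact hξ.2.trans ((le_abs_self a').trans (le_max_left _ _))
      have hD' : 0 ≤ deriv D ξ := le_trans hc.le (hcD ξ)
      have h1 : max (-(deriv f ξ)) 0 ≤ |deriv f ξ| := by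
        rcases le_or_gt (-(deriv f ξ)) 0 with h | h
        · simp [max_eq_right h, abs_nonneg]
        · rw [max_eq_left h.le]
          exact (neg_le_abs _)
      have h2 : |deriv f ξ| = deriv D ξ * |b ξ| := by
        rw [hfD ξ, abs_mul, abs_of_nonneg hD']
      have h3 : |b ξ| ≤ M * max |a'| |a| + |b 0| := by
        calc |b ξ| ≤ M * |ξ| + |b 0| := hblip ξ
          _ ≤ M * max |a'| |a| + |b 0| := by nlinarith
      calc max (-(deriv f ξ)) 0 ≤ deriv D ξ * |b ξ| := h2 ▸ h1
        _ ≤ deriv D ξ * K := by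
            apply mul_le_mul_of_nonneg_left _ hD'
            simpa [hK] using h3
        _ = K * deriv D ξ := mul_comm _ _
    -- FTC for D
    have hftc : ∫ ξ in a..a', deriv D ξ = D a' - D a := by
      apply intervalIntegral.integral_deriv_eq_sub
      · exact fun x _ => (hDC.differentiable one_ne_zero).differentiableAt
      · exact hcontD'.intervalIntegrable _ _
    have hDmono : D a ≤ D a' := by
      have h0 : (0:ℝ) ≤ ∫ ξ in a..a', deriv D ξ :=
        intervalIntegral.integral_nonneg haa (fun x _ => le_trans hc.le (hcD x))
      linarith [h0, hftc]
    -- the flux difference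
    have hsplit : (∫ ξ in (0:ℝ)..a', max (-(deriv f ξ)) 0)
        = (∫ ξ in (0:ℝ)..a, max (-(deriv f ξ)) 0) + ∫ ξ in a..a', max (-(deriv f ξ)) 0 :=
      (intervalIntegral.integral_add_adjacent_intervals
        (hcontg.intervalIntegrable _ _) (hcontg.intervalIntegrable _ _)).symm
    have hdiffeq : eoFlux f u a' - eoFlux f u a = -(∫ ξ in a..a', max (-(deriv f ξ)) 0) := by
      simp only [eoFlux]
      rw [hsplit]; ring
    have hInonneg : 0 ≤ ∫ ξ in a..a', max (-(deriv f ξ)) 0 :=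
      intervalIntegral.integral_nonneg haa (fun x _ => le_max_right _ _)
    have hIle : (∫ ξ in a..a', max (-(deriv f ξ)) 0) ≤ K * (D a' - D a) := by
      calc (∫ ξ in a..a', max (-(deriv f ξ)) 0)
          ≤ ∫ ξ in a..a', K * deriv D ξ := by
            apply intervalIntegral.integral_mono_on haa
              (hcontg.intervalIntegrable _ _)
              ((continuous_const.mul hcontD').intervalIntegrable _ _) hpt
        _ = K * (D a' - D a) := by
            rw [intervalIntegral.integral_const_mul, hftc]
    rw [hdiffeq, abs_neg, abs_of_nonneg hInonneg, abs_of_nonneg (by linarith : (0:ℝ) ≤ D a' - D a)]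
    exact hIle
  rcases le_total w v with h | h
  · exact key w v h
  · have := key v w h
    rw [abs_sub_comm (eoFlux f u v), abs_sub_comm (D v)]
    simpa [max_comm] using this

end
end
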